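/- arXiv:2605.15727 — 3 statements merged into one kernel-verified Lean document; each statement's English description precedes it below -/
import Mathlib

section
/- There exists an absolute constant C > 0 with the following property. Let p be a prime, q = p^2, and let A be a finite subset of F_q with 0 ∈ A and 1 ∈ A. Suppose that |r·A − A| ≤ p for every r ∈ D(A), where r·A − A := {r·a − a' : a, a' ∈ A}. If there exists r ∈ D(A) with 1 + r ∉ D(A), then |A| ≤ C·p^(2/3). -/
open Finset Pointwise

/-- The set of directions determined by the Cartesian product `A × A`:
`D(A) = {(a₁ - a₂)/(a₃ - a₄) : a₁, a₂, a₃, a₄ ∈ A, a₃ ≠ a₄}`. -/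
def dirs {F : Type*} [Field F] [DecidableEq F] (A : Finset F) : Finset F :=
  (((A ×ˢ A) ×ˢ A ×ˢ A).filter fun x => x.2.1 ≠ x.2.2).image
    fun x => (x.1.1 - x.1.2) / (x.2.1 - x.2.2)

section Helpers

variable {F : Type*} [Field F] [DecidableEq F] {A : Finset F}

lemma mem_dirs_of {a₁ a₂ a₃ a₄ : F} (h₁ : a₁ ∈ A) (h₂ : a₂ ∈ A) (h₃ : a₃ ∈ A)
    (h₄ : a₄ ∈ A) (h : a₃ ≠ a₄) : (a₁ - a₂) / (a₃ - a₄) ∈ dirs A := by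
  apply Finset.mem_image.mpr
  refine ⟨((a₁, a₂), (a₃, a₄)), ?_, rfl⟩
  simp [Finset.mem_filter, Finset.mem_product, h₁, h₂, h₃, h₄, h]

lemma neg_mem_dirs {r : F} (hr : r ∈ dirs A) : -r ∈ dirs A := by
  obtain ⟨x, hx, rfl⟩ := Finset.mem_image.mp hr
  rw [Finset.mem_filter] at hx
  obtain ⟨hx1, hne⟩ := hx
  rw [Finset.mem_product] at hx1
  obtain ⟨hx11, hx12⟩ := hx1
  rw [Finset.mem_product] at hx11 hx12
  have : -((x.1.1 - x.1.2) / (x.2.1 - x.2.2)) = (x.1.2 - x.1.1) / (x.2.1 - x.2.2) := by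
    rw [← neg_div, neg_sub]
  rw [this]
  exact mem_dirs_of hx11.2 hx11.1 hx12.1 hx12.2 hne

lemma neg_one_mem_dirs (h0 : (0 : F) ∈ A) (h1 : (1 : F) ∈ A) : (-1 : F) ∈ dirs A := by
  have : (-1 : F) = (0 - 1) / (1 - 0) := by norm_num
  rw [this]
  exact mem_dirs_of h0 h1 h1 h0 one_ne_zero

/-- If `-t ∈ dirs A` then `t•A + A` is (up to negation) `(-t)•A - A`. -/
lemma smul_add_eq_neg : ∀ t : F, (t • A + A) = -((-t) • A - A) := by
  intro t
  ext x
  simp only [Finset.mem_neg, Finset.mem_sub, Finset.mem_add, Finset.mem_smul_finset,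
    smul_eq_mul]
  constructor
  · rintro ⟨u, ⟨a, ha, rfl⟩, v, hv, rfl⟩
    refine ⟨-(t * a) - v, ⟨(-t) * a, ⟨a, ha, rfl⟩, v, hv, by ring⟩, by ring⟩
  · rintro ⟨y, ⟨u, ⟨a, ha, rfl⟩, v, hv, rfl⟩, rfl⟩
    exact ⟨t * a, ⟨a, ha, rfl⟩, v, hv, by ring⟩

end Helpers

/-- There is an absolute constant `C > 0` such that: if `F` is the field with `p^2`
elements, `A ⊆ F` contains `0` and `1`, `|r·A - A| ≤ p` for all `r ∈ D(A)`, and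
some `r ∈ D(A)` has `1 + r ∉ D(A)`, then `|A| ≤ C·p^(2/3)`. -/
theorem stmt_7 :
    ∃ C : ℝ, 0 < C ∧
      ∀ (p : ℕ) (F : Type) [Field F] [Fintype F] [DecidableEq F],
        p.Prime → Fintype.card F = p ^ 2 →
        ∀ A : Finset F, (0 : F) ∈ A → (1 : F) ∈ A →
          (∀ r ∈ dirs A, (r • A - A).card ≤ p) →
          (∃ r ∈ dirs A, 1 + r ∉ dirs A) →
          (A.card : ℝ) ≤ C * (p : ℝ) ^ ((2 : ℝ) / 3) := by
  refine ⟨2, by norm_num, ?_⟩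
  intro p F _ _ _ hp hcard A h0 h1 hsmall hex
  obtain ⟨r, hr, hs⟩ := hex
  have hA : A.Nonempty := ⟨0, h0⟩
  -- `|t•A + A| ≤ p` whenever `-t ∈ dirs A`
  have key : ∀ t : F, -t ∈ dirs A → (t • A + A).card ≤ p := by
    intro t ht
    rw [smul_add_eq_neg t, Finset.card_neg]
    exact hsmall _ ht
  have hAA : (A + A).card ≤ p := by
    have := key 1 (by simpa using neg_one_mem_dirs h0 h1)
    rwa [one_smul] at this
  have hAr : (A + r • A).card ≤ p := by
    have := key r (neg_mem_dirs hr)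
    rwa [add_comm] at this
  set W : Finset F := A ∪ r • A with hW
  have hAW : (A + W).card ≤ 2 * p := by
    have : A + W = (A + A) ∪ (A + r • A) := by
      rw [hW, Finset.add_union]
    calc (A + W).card ≤ (A + A).card + (A + r • A).card := by
          rw [this]; exact Finset.card_union_le _ _
      _ ≤ 2 * p := by omega
  -- choose the Petridis minimizer X ⊆ A
  obtain ⟨X, hXmem, hXmin⟩ :=
    Finset.exists_min_image (A.powerset.filter fun Z => Z.Nonempty)
      (fun Z => ((Z + W).card : ℚ) / (Z.card : ℚ))
      ⟨A, by simp [Finset.mem_filter, Finset.mem_powerset, hA]⟩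
  rw [Finset.mem_filter, Finset.mem_powerset] at hXmem
  obtain ⟨hXA, hXne⟩ := hXmem
  have hXpos : 0 < X.card := hXne.card_pos
  -- cross-multiplied minimality
  have hmin : ∀ Z : Finset F, Z ⊆ A → Z.Nonempty →
      (X + W).card * Z.card ≤ (Z + W).card * X.card := by
    intro Z hZ hZne
    have h := hXmin Z (by simp [Finset.mem_filter, Finset.mem_powerset, hZ, hZne])
    rw [div_le_div_iff₀ (by exact_mod_cast hXpos) (by exact_mod_cast hZne.card_pos)] at h
    exact_mod_cast h
  -- Petridis
  have hPet : (X + W + W).card * X.card ≤ (X + W).card * (X + W).card := by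
    have h := Finset.pluennecke_petridis_inequality_add (A := X) (B := W) W ?_
    · rwa [add_comm W X] at h
    intro A' hA'
    rcases A'.eq_empty_or_nonempty with rfl | hA'ne
    · simp
    · exact hmin A' (hA'.trans hXA) hA'ne
  -- injectivity from 1 + r ∉ dirs A
  set s : F := 1 + r with hsdef
  have hinj : X.card * A.card = (X + s • A).card := by
    have himg : X + s • A = (X ×ˢ A).image fun q => q.1 + s * q.2 := by
      ext u
      simp only [Finset.mem_add, Finset.mem_smul_finset, smul_eq_mul, Finset.mem_image,
        Finset.mem_product, Prod.exists]
      constructor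
      · rintro ⟨x, hx, v, ⟨a, ha, rfl⟩, rfl⟩
        exact ⟨x, a, ⟨hx, ha⟩, rfl⟩
      · rintro ⟨x, a, ⟨hx, ha⟩, rfl⟩
        exact ⟨x, hx, s * a, ⟨a, ha, rfl⟩, rfl⟩
    rw [himg, Finset.card_image_of_injOn, Finset.card_product]
    rintro ⟨x, a⟩ hxa ⟨x', a'⟩ hxa' hEq
    simp only [Finset.mem_coe, Finset.mem_product] at hxa hxa'
    simp only at hEq
    by_cases haa : a = a'
    · subst haa
      exact Prod.ext (add_right_cancel hEq) rfl
    · exfalso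
      apply hs
      have hne : a' - a ≠ 0 := sub_ne_zero.mpr (fun h => haa h.symm)
      have hseq : s = (x - x') / (a' - a) := by
        rw [eq_div_iff hne]
        linear_combination -hEq
      rw [hseq]
      exact mem_dirs_of (hXA hxa.1) (hXA hxa'.1) hxa'.2 hxa.2 (fun h => haa h.symm)
  -- X + s•A ⊆ X + W + W
  have hsub : X + s • A ⊆ X + W + W := by
    intro u hu
    rw [Finset.mem_add] at hu
    obtain ⟨x, hx, v, hv, rfl⟩ := hu
    rw [Finset.mem_smul_finset] at hv
    obtain ⟨a, ha, rfl⟩ := hv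
    have h1' : x + a ∈ X + W :=
      Finset.add_mem_add hx (Finset.mem_union_left _ ha)
    have h2' : r * a ∈ W :=
      Finset.mem_union_right _ (by rw [Finset.mem_smul_finset]; exact ⟨a, ha, rfl⟩)
    have : x + s • a = (x + a) + r * a := by
      rw [hsdef]; simp [smul_eq_mul]; ring
    rw [this]
    exact Finset.add_mem_add h1' h2'
  -- numerical chain
  have e1 : X.card * A.card ≤ (X + W + W).card := by
    rw [hinj]; exact Finset.card_le_card hsub
  have e3 : (X + W).card * A.card ≤ 2 * p * X.card := by
    calc (X + W).card * A.card ≤ (A + W).card * X.card := hmin A (le_refl _) hA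
      _ ≤ 2 * p * X.card := Nat.mul_le_mul_right _ hAW
  have hcube : A.card ^ 3 ≤ 4 * p ^ 2 := by
    have c1 : (X.card * A.card) * X.card ≤ (X + W).card * (X + W).card :=
      le_trans (Nat.mul_le_mul_right _ e1) hPet
    have c2 : ((X.card * A.card) * X.card) * (A.card * A.card) ≤
        (2 * p * X.card) * (2 * p * X.card) := by
      calc ((X.card * A.card) * X.card) * (A.card * A.card)
          ≤ ((X + W).card * (X + W).card) * (A.card * A.card) :=
            Nat.mul_le_mul_right _ c1
        _ = ((X + W).card * A.card) * ((X + W).card * A.card) := by ring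
        _ ≤ (2 * p * X.card) * (2 * p * X.card) := Nat.mul_le_mul e3 e3
    have c3 : A.card ^ 3 * X.card ^ 2 ≤ (4 * p ^ 2) * X.card ^ 2 := by
      calc A.card ^ 3 * X.card ^ 2 = ((X.card * A.card) * X.card) * (A.card * A.card) := by ring
        _ ≤ (2 * p * X.card) * (2 * p * X.card) := c2
        _ = (4 * p ^ 2) * X.card ^ 2 := by ring
    exact Nat.le_of_mul_le_mul_right c3 (by positivity)
  -- pass to the reals
  have hp2 : (0 : ℝ) ≤ (p : ℝ) := by positivity
  have hcubeR : (A.card : ℝ) ^ 3 ≤ (2 * (p : ℝ) ^ ((2 : ℝ) / 3)) ^ 3 := by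
    have h8 : (2 * (p : ℝ) ^ ((2 : ℝ) / 3)) ^ 3 = 8 * (p : ℝ) ^ 2 := by
      rw [mul_pow]
      rw [← Real.rpow_natCast ((p : ℝ) ^ ((2 : ℝ) / 3)) 3, ← Real.rpow_mul hp2]
      rw [show ((2 : ℝ) / 3 * (3 : ℕ)) = ((2 : ℕ) : ℝ) by norm_num, Real.rpow_natCast]
      norm_num
    rw [h8]
    have h4 : (A.card : ℝ) ^ 3 ≤ 4 * (p : ℝ) ^ 2 := by exact_mod_cast hcube
    have h0' : (0 : ℝ) ≤ (p : ℝ) ^ 2 := by positivity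
    linarith
  have := le_of_pow_le_pow_left₀ (n := 3) (by norm_num) (by positivity) hcubeR
  exact this
end

section
/- Let p be a prime, q = p^2, and let A be a finite subset of F_q with 0 ∈ A and 1 ∈ A. Suppose that |r·A − A| ≤ p for every r ∈ D(A), where r·A − A := {r·a − a' : a, a' ∈ A}. If there exist a ∈ A and r ∈ D(A) such that a·r ∉ D(A), then |A|^3 ≤ p^2. -/
open Finset Pointwise

lemma mem_dirs {F : Type*} [Field F] [DecidableEq F] {A : Finset F}
    {a1 a2 a3 a4 : F} (h1 : a1 ∈ A) (h2 : a2 ∈ A) (h3 : a3 ∈ A) (h4 : a4 ∈ A)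
    (hne : a3 ≠ a4) : (a1 - a2) / (a3 - a4) ∈ dirs A := by
  simp only [dirs, mem_image, mem_filter, mem_product]
  exact ⟨((a1, a2), (a3, a4)), ⟨⟨⟨h1, h2⟩, h3, h4⟩, hne⟩, rfl⟩

/-- If `F` is the field with `p^2` elements, `A ⊆ F` contains `0` and `1`,
`|r·A - A| ≤ p` for all `r ∈ D(A)`, and there are `a ∈ A`, `r ∈ D(A)` with
`a·r ∉ D(A)`, then `|A|^3 ≤ p^2`. -/
theorem stmt_8 {F : Type*} [Field F] [Fintype F] [DecidableEq F]
    (p : ℕ) (hp : p.Prime) (hq : Fintype.card F = p ^ 2)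
    (A : Finset F) (h0 : (0 : F) ∈ A) (h1 : (1 : F) ∈ A)
    (hsmall : ∀ r ∈ dirs A, (r • A - A).card ≤ p)
    (hbad : ∃ a ∈ A, ∃ r ∈ dirs A, a * r ∉ dirs A) :
    A.card ^ 3 ≤ p ^ 2 := by
  obtain ⟨a, haA, r, hrD, har⟩ := hbad
  have h0d : (0 : F) ∈ dirs A := by
    simpa using mem_dirs (A := A) h0 h0 h1 h0 one_ne_zero
  have haD : a ∈ dirs A := by
    simpa using mem_dirs (A := A) haA h0 h1 h0 one_ne_zero
  have ha0 : a ≠ 0 := by rintro rfl; rw [zero_mul] at har; exact har h0d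
  have hr0 : r ≠ 0 := by rintro rfl; rw [mul_zero] at har; exact har h0d
  have key : (((A ×ˢ A) ×ˢ A)).card ≤ ((a • A - A) ×ˢ (r • A - A)).card := by
    apply Finset.card_le_card_of_injOn
      (fun x => (a * x.1.1 - x.1.2, r * x.1.2 - x.2))
    · rintro ⟨⟨v, w⟩, z⟩ hx
      change ((v, w), z) ∈ (A ×ˢ A) ×ˢ A at hx
      show (_ : F × F) ∈ (a • A - A) ×ˢ (r • A - A)
      simp only [mem_product] at hx ⊢
      obtain ⟨⟨hv, hw⟩, hz⟩ := hx
      constructor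
      · have : a • v ∈ a • A := Finset.smul_mem_smul_finset hv
        rw [smul_eq_mul] at this
        exact Finset.sub_mem_sub this hw
      · have : r • w ∈ r • A := Finset.smul_mem_smul_finset hw
        rw [smul_eq_mul] at this
        exact Finset.sub_mem_sub this hz
    · rintro ⟨⟨v, w⟩, z⟩ hx ⟨⟨v', w'⟩, z'⟩ hy heq
      simp only [mem_product, coe_product, Set.mem_prod, mem_coe] at hx hy
      obtain ⟨⟨hv, hw⟩, hz⟩ := hx
      obtain ⟨⟨hv', hw'⟩, hz'⟩ := hy
      simp only [Prod.mk.injEq] at heq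
      obtain ⟨e1, e2⟩ := heq
      have hvv : v = v' := by
        by_contra hvv
        have hww : w - w' = a * (v - v') := by linear_combination -e1
        have hzz : z - z' = r * (w - w') := by linear_combination -e2
        have : a * r = (z - z') / (v - v') := by
          rw [hzz, hww]
          field_simp [sub_ne_zero.mpr hvv]
        rw [this] at har
        exact har (mem_dirs hz hz' hv hv' hvv)
      subst hvv
      have hww : w = w' := by linear_combination -e1
      subst hww
      have hzz : z = z' := by linear_combination -e2
      subst hzz
      rfl
  have hcard : (((A ×ˢ A) ×ˢ A)).card = A.card ^ 3 := by
    simp [Finset.card_product]; ring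
  rw [hcard] at key
  calc A.card ^ 3 ≤ ((a • A - A) ×ˢ (r • A - A)).card := key
    _ = (a • A - A).card * (r • A - A).card := Finset.card_product _ _
    _ ≤ p * p := Nat.mul_le_mul (hsmall a haD) (hsmall r hrD)
    _ = p ^ 2 := (sq p).symm
end

section
/- Let p be an odd prime, q = p^2, and let A be a finite subset of F_q with 2 ≤ |A| < p. If there exists y ∈ D(A) such that |y·A − A| > p, where y·A − A := {y·a − a' : a, a' ∈ A}, then |D(A)| ≥ (|A|^2 + 1)/2. -/
open Finset Pointwise

namespace Stmt11

open Polynomial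

variable {F : Type*} [Field F]

/-- Weighted-degree bound: every coefficient `c_i(y)` of `f(x) = Σ c_i(y) x^i`
satisfies `deg_y c_i + i ≤ d`. -/
def WB (f : Polynomial (Polynomial F)) (d : ℕ) : Prop :=
  ∀ i, f.coeff i ≠ 0 → (f.coeff i).natDegree + i ≤ d

lemma WB_zero (d : ℕ) : WB (0 : Polynomial (Polynomial F)) d := by
  intro i hi; simp at hi

lemma WB_mono {f : Polynomial (Polynomial F)} {d e : ℕ} (h : WB f d) (hde : d ≤ e) : WB f e :=
  fun i hi => le_trans (h i hi) hde

lemma WB_sub {f g : Polynomial (Polynomial F)} {d : ℕ} (hf : WB f d) (hg : WB g d) :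
    WB (f - g) d := by
  intro i hi
  rw [coeff_sub] at hi ⊢
  by_cases h1 : f.coeff i = 0
  · by_cases h2 : g.coeff i = 0
    · simp [h1, h2] at hi
    · calc (f.coeff i - g.coeff i).natDegree + i
          ≤ max (f.coeff i).natDegree (g.coeff i).natDegree + i := by
            exact Nat.add_le_add_right (natDegree_sub_le _ _) i
        _ ≤ d := by
            simp only [h1, natDegree_zero, max_def]
            split <;> [exact hg i h2; omega]
  · by_cases h2 : g.coeff i = 0
    · have := hf i h1
      calc (f.coeff i - g.coeff i).natDegree + i
          ≤ max (f.coeff i).natDegree (g.coeff i).natDegree + i :=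
            Nat.add_le_add_right (natDegree_sub_le _ _) i
        _ ≤ d := by
            simp only [h2, natDegree_zero, max_def]
            split <;> omega
    · have h1' := hf i h1
      have h2' := hg i h2
      calc (f.coeff i - g.coeff i).natDegree + i
          ≤ max (f.coeff i).natDegree (g.coeff i).natDegree + i :=
            Nat.add_le_add_right (natDegree_sub_le _ _) i
        _ ≤ d := by rw [max_def]; split <;> omega

lemma WB_mul {f g : Polynomial (Polynomial F)} {d e : ℕ} (hf : WB f d) (hg : WB g e) :
    WB (f * g) (d + e) := by
  intro i hi
  rw [coeff_mul] at hi ⊢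
  -- first: i ≤ d + e
  have hkey : ∀ jk ∈ Finset.HasAntidiagonal.antidiagonal i,
      f.coeff jk.1 * g.coeff jk.2 = 0 ∨
      ((f.coeff jk.1 * g.coeff jk.2).natDegree + i ≤ d + e) := by
    rintro ⟨j, k⟩ hjk
    dsimp only
    simp only [Finset.HasAntidiagonal.mem_antidiagonal] at hjk
    by_cases h1 : f.coeff j = 0
    · left; simp [h1]
    by_cases h2 : g.coeff k = 0
    · left; simp [h2]
    right
    have hj := hf j h1
    have hk := hg k h2
    have := natDegree_mul_le (p := f.coeff j) (q := g.coeff k)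
    omega
  have hile : i ≤ d + e := by
    by_contra hgt
    apply hi
    apply Finset.sum_eq_zero
    rintro jk hjk
    rcases hkey jk hjk with h | h
    · exact h
    · omega
  have : (∑ jk ∈ Finset.HasAntidiagonal.antidiagonal i, f.coeff jk.1 * g.coeff jk.2).natDegree ≤ d + e - i := by
    apply natDegree_sum_le_of_forall_le
    rintro jk hjk
    rcases hkey jk hjk with h | h
    · simp [h]
    · omega
  omega

lemma WB_prod {ι : Type*} (s : Finset ι) (f : ι → Polynomial (Polynomial F)) (e : ι → ℕ)
    (h : ∀ i ∈ s, WB (f i) (e i)) : WB (∏ i ∈ s, f i) (∑ i ∈ s, e i) := by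
  induction s using Finset.cons_induction with
  | empty =>
    simp only [Finset.prod_empty, Finset.sum_empty]
    intro i hi
    rcases eq_or_ne i 0 with rfl | hne
    · simp [coeff_one]
    · simp [coeff_one, hne] at hi
  | cons a s ha ih =>
    rw [Finset.prod_cons, Finset.sum_cons]
    exact WB_mul (h a (Finset.mem_cons_self a s)) (ih fun i hi => h i (Finset.mem_cons_of_mem hi))

lemma WB_C_mul_X_pow (c : Polynomial F) (k : ℕ) :
    WB (C c * X ^ k) (c.natDegree + k) := by
  intro i hi
  rw [coeff_C_mul, coeff_X_pow] at hi ⊢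
  by_cases hik : i = k
  · subst hik; simp
  · simp [hik] at hi

lemma WB_modByMonic {R : Polynomial (Polynomial F)} (hR : R.Monic) {N : ℕ}
    (hRdeg : R.natDegree = N) (hWBR : WB R N) {d : ℕ} :
    ∀ f : Polynomial (Polynomial F), WB f d → WB (f %ₘ R) d := by
  have H : ∀ n (f : Polynomial (Polynomial F)), f.natDegree ≤ n → WB f d → WB (f %ₘ R) d := by
    intro n
    induction n using Nat.strong_induction_on with
    | _ n ih =>
    intro f hfn hf
    by_cases hlt : f.degree < R.degree
    · rwa [(modByMonic_eq_self_iff hR).2 hlt]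
    push_neg at hlt
    have hf0 : f ≠ 0 := by
      rintro rfl
      rw [degree_zero] at hlt
      have : R = 0 := degree_eq_bot.mp (le_bot_iff.mp hlt)
      exact hR.ne_zero this
    have hR0 : R ≠ 0 := hR.ne_zero
    have hdegle : R.natDegree ≤ f.natDegree := natDegree_le_natDegree hlt
    set c := f.leadingCoeff with hc
    have hc0 : c ≠ 0 := leadingCoeff_ne_zero.mpr hf0
    set k := f.natDegree - N with hk
    have hNk : N + k = f.natDegree := by omega
    set s : Polynomial (Polynomial F) := C c * X ^ k with hs
    have hs0 : s ≠ 0 :=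
      mul_ne_zero (C_ne_zero.mpr hc0) (pow_ne_zero k X_ne_zero)
    have hRs0 : R * s ≠ 0 := mul_ne_zero hR0 hs0
    have hnds : s.natDegree = k := by
      rw [hs, natDegree_C_mul hc0, natDegree_X_pow]
    have hndRs : (R * s).natDegree = f.natDegree := by
      rw [natDegree_mul hR0 hs0, hRdeg, hnds]; omega
    have hdegeq : f.degree = (R * s).degree := by
      rw [degree_eq_natDegree hf0, degree_eq_natDegree hRs0, hndRs]
    have hlceq : f.leadingCoeff = (R * s).leadingCoeff := by
      rw [leadingCoeff_mul, hR.leadingCoeff, one_mul, hs, leadingCoeff_mul, leadingCoeff_C,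
        leadingCoeff_X_pow, mul_one]
    set g := f - R * s with hg
    have hmod : f %ₘ R = g %ₘ R := by
      have h1 := modByMonic_add_div g R
      have h2 : g %ₘ R + R * (g /ₘ R + s) = f := by
        rw [mul_add]
        rw [← add_assoc, h1, hg]
        ring
      have := div_modByMonic_unique (f := f) (g := R) (g /ₘ R + s) (g %ₘ R) hR
        ⟨h2, degree_modByMonic_lt g hR⟩
      exact this.2
    by_cases hg0 : g = 0
    · rw [hmod, hg0, zero_modByMonic]; exact WB_zero d
    have hglt : g.degree < f.degree := by
      rw [hg]
      exact degree_sub_lt hdegeq hf0 hlceq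
    have hgnd : g.natDegree < f.natDegree := natDegree_lt_natDegree hg0 hglt
    have hWBs : WB s (c.natDegree + k) := WB_C_mul_X_pow c k
    have hcd : c.natDegree + f.natDegree ≤ d := hf f.natDegree (by rwa [← leadingCoeff] )
    have hWBRs : WB (R * s) d := by
      apply WB_mono (WB_mul hWBR hWBs)
      omega
    have hWBg : WB g d := WB_sub hf hWBRs
    rw [hmod]
    exact ih g.natDegree (by omega) g le_rfl hWBg
  exact fun f => H f.natDegree f le_rfl

end Stmt11
set_option linter.unusedSectionVars false

namespace Stmt11

open Polynomial

variable {F : Type*} [Field F] [Fintype F] [DecidableEq F]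

lemma eval_xqx (v : F) : ((X ^ Fintype.card F - X : F[X])).eval v = 0 := by
  simp [FiniteField.pow_card]

lemma deriv_xqx : Polynomial.derivative (X ^ Fintype.card F - X : F[X]) = -1 := by
  rw [derivative_sub, derivative_X_pow, derivative_X]
  rw [show ((Fintype.card F : F)) = 0 from FiniteField.cast_card_eq_zero F]
  simp

lemma squarefree_xqx : Squarefree (X ^ Fintype.card F - X : F[X]) := by
  have hsep : Separable (X ^ Fintype.card F - X : F[X]) := by
    rw [separable_def, deriv_xqx]
    exact (isCoprime_one_right).neg_right
  exact hsep.squarefree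

lemma xqx_eq_prod : (X ^ Fintype.card F - X : F[X]) = ∏ v ∈ (Finset.univ : Finset F), (X - C v) := by
  have h1 : 1 < Fintype.card F := Fintype.one_lt_card
  have hmonic : (X ^ Fintype.card F - X : F[X]).Monic := by
    apply monic_X_pow_sub
    rw [degree_X]
    exact_mod_cast h1
  have hroots : (X ^ Fintype.card F - X : F[X]).roots = Finset.univ.val :=
    FiniteField.roots_X_pow_card_sub_X F
  have hnd : (X ^ Fintype.card F - X : F[X]).natDegree = Fintype.card F := by
    rw [natDegree_sub_eq_left_of_natDegree_lt, natDegree_X_pow]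
    rw [natDegree_X, natDegree_X_pow]
    exact h1
  have hcard : Multiset.card (X ^ Fintype.card F - X : F[X]).roots =
      (X ^ Fintype.card F - X : F[X]).natDegree := by
    rw [hroots, hnd]
    simp [Finset.card_univ]
  have := prod_multiset_X_sub_C_of_monic_of_roots_card_eq hmonic hcard
  rw [← this, hroots]
  rw [Finset.prod_eq_multiset_prod]

lemma natDegree_xqx : (X ^ Fintype.card F - X : F[X]).natDegree = Fintype.card F := by
  have h1 : 1 < Fintype.card F := Fintype.one_lt_card
  rw [natDegree_sub_eq_left_of_natDegree_lt, natDegree_X_pow]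
  rw [natDegree_X, natDegree_X_pow]
  exact h1

/-- helper: WB bound for the linear factors of the Rédei polynomial -/
lemma WB_linear_factor (u : Polynomial F) (hu : u.natDegree ≤ 1) :
    WB (X - C u : Polynomial (Polynomial F)) 1 := by
  intro i hi
  match i with
  | 0 =>
    rw [coeff_sub, coeff_X_zero, coeff_C_zero, zero_sub, natDegree_neg]
    omega
  | 1 =>
    rw [coeff_sub, coeff_X_one, coeff_C, if_neg one_ne_zero, sub_zero, natDegree_one]
  | (i + 2) =>
    exfalso
    apply hi
    rw [coeff_sub, coeff_X, coeff_C]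
    norm_num

end Stmt11

open Polynomial in
/-- If `p` is an odd prime, `F` is the field with `p^2` elements, `A ⊆ F` has
`2 ≤ |A| < p`, and some `y ∈ D(A)` satisfies `|y·A - A| > p`, then
`|D(A)| ≥ (|A|^2 + 1)/2`. -/
theorem stmt_11 {F : Type*} [Field F] [Fintype F] [DecidableEq F]
    (p : ℕ) (hp : p.Prime) (hodd : Odd p) (hq : Fintype.card F = p ^ 2)
    (A : Finset F) (hA2 : 2 ≤ A.card) (hAp : A.card < p)
    (hbig : ∃ y ∈ dirs A, p < (y • A - A).card) :
    2 * (dirs A).card ≥ A.card ^ 2 + 1 := by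

  classical
  obtain ⟨y₀, hy₀D, hy₀card⟩ := hbig
  set q : ℕ := Fintype.card F with hqdef
  have hq1 : 1 < q := Fintype.one_lt_card
  -- the grid size
  set N : ℕ := (A ×ˢ A).card with hNdef
  have hNA : N = A.card ^ 2 := by rw [hNdef, Finset.card_product, sq]
  have hN4 : 4 ≤ N := by
    rw [hNA]
    calc 4 = 2 ^ 2 := by norm_num
    _ ≤ A.card ^ 2 := Nat.pow_le_pow_left hA2 2
  have hNq : N < q := by
    rw [hNA, hq]
    exact Nat.pow_lt_pow_left hAp (by norm_num)
  -- the Rédei polynomial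
  set bigR : Polynomial (Polynomial F) :=
    ∏ ab ∈ A ×ˢ A, (X - C (C ab.2 - C ab.1 * X)) with hbigRdef
  have hRmonic : bigR.Monic :=
    monic_prod_of_monic _ _ (fun ab _ => monic_X_sub_C _)
  have hRdeg : bigR.natDegree = N := by
    have hdeg1 : ∀ ab ∈ A ×ˢ A,
        (X - C (C ab.2 - C ab.1 * X) : Polynomial (Polynomial F)).natDegree = 1 :=
      fun ab _ => natDegree_X_sub_C _
    rw [hbigRdef, natDegree_prod_of_monic _ _ (fun ab _ => monic_X_sub_C _),
      Finset.sum_congr rfl hdeg1, Finset.sum_const, smul_eq_mul, mul_one]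
  have hRWB : Stmt11.WB bigR N := by
    have h := Stmt11.WB_prod (A ×ˢ A) (fun ab => (X - C (C ab.2 - C ab.1 * X))) (fun _ => 1)
      (fun ab _ => Stmt11.WB_linear_factor _ (by
        refine (natDegree_sub_le _ _).trans ?_
        refine max_le (by simp) ?_
        refine (natDegree_mul_le).trans ?_
        simp))
    rw [Finset.sum_const, smul_eq_mul, mul_one] at h
    exact h
  -- W = (X^q - X) mod R
  set W : Polynomial (Polynomial F) := (X ^ q - X) %ₘ bigR with hWdef
  have hWBxqx : Stmt11.WB (X ^ q - X : Polynomial (Polynomial F)) q := by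
    intro i hi
    by_cases h1 : i = q
    · subst h1
      rw [coeff_sub, coeff_X_pow, coeff_X, if_pos rfl, if_neg (by omega)]
      simp
    · by_cases h2 : i = 1
      · subst h2
        rw [coeff_sub, coeff_X_pow, coeff_X, if_neg (by omega), if_pos rfl, zero_sub,
          natDegree_neg, natDegree_one]
        omega
      · exfalso
        apply hi
        rw [coeff_sub, coeff_X_pow, coeff_X, if_neg h1, if_neg (by omega)]
        simp
  have hWBW : Stmt11.WB W q := Stmt11.WB_modByMonic hRmonic hRdeg hRWB _ hWBxqx
  -- the specialized Rédei polynomial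
  set Rm : F → Polynomial F := fun m => ∏ ab ∈ A ×ˢ A, (X - C (ab.2 - ab.1 * m)) with hRmdef
  have hRm_monic : ∀ m, (Rm m).Monic :=
    fun m => monic_prod_of_monic _ _ (fun ab _ => monic_X_sub_C _)
  have hRm_deg : ∀ m, (Rm m).natDegree = N := by
    intro m
    have hdeg1 : ∀ ab ∈ A ×ˢ A, (X - C (ab.2 - ab.1 * m) : Polynomial F).natDegree = 1 :=
      fun ab _ => natDegree_X_sub_C _
    rw [hRmdef]
    rw [natDegree_prod_of_monic _ _ (fun ab _ => monic_X_sub_C _),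
      Finset.sum_congr rfl hdeg1, Finset.sum_const, smul_eq_mul, mul_one]
  have hmapR : ∀ m, bigR.map (evalRingHom m) = Rm m := by
    intro m
    rw [hbigRdef, Polynomial.map_prod]
    refine Finset.prod_congr rfl ?_
    intro ab _
    rw [Polynomial.map_sub, map_X, map_C]
    simp [coe_evalRingHom]
  have hmapW : ∀ m, W.map (evalRingHom m) = (X ^ q - X) %ₘ Rm m := by
    intro m
    rw [hWdef, map_modByMonic _ hRmonic, hmapR]
    congr 1
    rw [Polynomial.map_sub, Polynomial.map_pow, map_X]
  -- non-directions give squarefree specializations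
  have hinj : ∀ m ∉ dirs A, ∀ ab ∈ A ×ˢ A, ∀ cd ∈ A ×ˢ A,
      ab.2 - ab.1 * m = cd.2 - cd.1 * m → ab = cd := by
    rintro m hm ⟨a, b⟩ hab ⟨a', b'⟩ hab' heq
    simp only [Finset.mem_product] at hab hab'
    dsimp only at heq
    by_cases haa : a = a'
    · subst haa
      have hbb : b = b' := by rwa [sub_left_inj] at heq
      rw [hbb]
    · exfalso
      apply hm
      have hne : a - a' ≠ 0 := sub_ne_zero.mpr haa
      have hmval : (b - b') / (a - a') = m := by
        field_simp
        linear_combination heq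
      simp only [dirs, Finset.mem_image]
      refine ⟨((b, b'), (a, a')), ?_, ?_⟩
      · rw [Finset.mem_filter]
        refine ⟨?_, haa⟩
        simp only [Finset.mem_product]
        exact ⟨⟨hab.2, hab'.2⟩, ⟨hab.1, hab'.1⟩⟩
      · dsimp only
        exact hmval
  have hWm0 : ∀ m ∉ dirs A, W.map (evalRingHom m) = 0 := by
    intro m hm
    have hdvd : Rm m ∣ X ^ q - X := by
      have himg : (∏ v ∈ (A ×ˢ A).image (fun ab => ab.2 - ab.1 * m), (X - C v)) = Rm m := by
        rw [hRmdef]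
        exact Finset.prod_image (fun x hx y hy h => hinj m hm x hx y hy h)
      rw [← himg, Stmt11.xqx_eq_prod]
      exact Finset.prod_dvd_prod_of_subset _ _ _ (Finset.subset_univ _)
    rw [hmapW m, (modByMonic_eq_zero_iff_dvd (hRm_monic m)).mpr hdvd]
  -- unpack the direction y₀
  have hy₀mem := hy₀D
  simp only [dirs, Finset.mem_image] at hy₀mem
  obtain ⟨⟨⟨x1, x2⟩, ⟨x3, x4⟩⟩, hquad, hy₀val⟩ := hy₀mem
  rw [Finset.mem_filter] at hquad
  obtain ⟨hquadmem, hx34⟩ := hquad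
  simp only [Finset.mem_product] at hquadmem
  simp only at hy₀val hx34
  have hx34ne : x3 - x4 ≠ 0 := sub_ne_zero.mpr hx34
  have hy₀eq : y₀ * (x3 - x4) = x1 - x2 := by
    rw [← hy₀val]
    exact div_mul_cancel₀ _ hx34ne
  -- the two coincident factors
  have hP12 : ((x3 : F), (x1 : F)) ≠ ((x4 : F), (x2 : F)) := by
    intro h
    exact hx34 (congrArg Prod.fst h)
  have hveq : x1 - x3 * y₀ = x2 - x4 * y₀ := by linear_combination -hy₀eq
  -- W specialized at y₀ is nonzero
  have hWy0 : W.map (evalRingHom y₀) ≠ 0 := by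
    intro h0
    rw [hmapW y₀] at h0
    have hdvd : Rm y₀ ∣ X ^ q - X := (modByMonic_eq_zero_iff_dvd (hRm_monic y₀)).mp h0
    have hsqdvd : (X - C (x1 - x3 * y₀)) * (X - C (x1 - x3 * y₀)) ∣ Rm y₀ := by
      have heq2 : (X - C (x1 - x3 * y₀)) * (X - C (x1 - x3 * y₀)) =
          ∏ ab ∈ ({((x3 : F), (x1 : F)), ((x4 : F), (x2 : F))} : Finset (F × F)),
            (X - C (ab.2 - ab.1 * y₀)) := by
        rw [Finset.prod_pair hP12]
        dsimp only
        rw [← hveq]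
      rw [heq2, hRmdef]
      apply Finset.prod_dvd_prod_of_subset
      intro z hz
      simp only [Finset.mem_insert, Finset.mem_singleton] at hz
      rcases hz with rfl | rfl
      · simp only [Finset.mem_product]
        exact ⟨hquadmem.2.1, hquadmem.1.1⟩
      · simp only [Finset.mem_product]
        exact ⟨hquadmem.2.2, hquadmem.1.2⟩
    have := Stmt11.squarefree_xqx (F := F) (X - C (x1 - x3 * y₀)) (hsqdvd.trans hdvd)
    exact Polynomial.not_isUnit_X_sub_C (x1 - x3 * y₀) this
  have hW0 : W ≠ 0 := by
    intro h
    apply hWy0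
    rw [h, Polynomial.map_zero]
  -- |D| ≥ t
  set t : ℕ := W.natDegree with htdef
  set c : Polynomial F := W.coeff t with hcdef
  have hc0 : c ≠ 0 := by
    rw [hcdef, htdef, ← leadingCoeff]
    exact leadingCoeff_ne_zero.mpr hW0
  have hcdegt : c.natDegree + t ≤ q := hWBW t hc0
  have hUcard : q - (dirs A).card ≤ q - t := by
    have hsub : Finset.univ \ dirs A ⊆ c.roots.toFinset := by
      intro m hm
      rw [Finset.mem_sdiff] at hm
      rw [Multiset.mem_toFinset, mem_roots hc0]
      have h0 := hWm0 m hm.2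
      have hcoeff : (W.map (evalRingHom m)).coeff t = 0 := by rw [h0]; simp
      rw [coeff_map] at hcoeff
      exact hcoeff
    calc q - (dirs A).card = (Finset.univ \ dirs A).card := by
          rw [Finset.card_sdiff_of_subset (Finset.subset_univ _), Finset.card_univ]
      _ ≤ c.roots.toFinset.card := Finset.card_le_card hsub
      _ ≤ Multiset.card c.roots := Multiset.toFinset_card_le _
      _ ≤ c.natDegree := Polynomial.card_roots' c
      _ ≤ q - t := by omega
  have htD : t ≤ (dirs A).card := by
    have h1 : (dirs A).card ≤ q := by
      rw [hqdef]
      exact Finset.card_le_univ _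
    omega
  -- the single-variable analysis at y₀
  set Wy : Polynomial F := W.map (evalRingHom y₀) with hWydef
  set ty : ℕ := Wy.natDegree with htydef
  have htyt : ty ≤ t := natDegree_map_le
  set σ : Polynomial F := Rm y₀ * ((X ^ q - X) /ₘ Rm y₀) with hσdef
  have hσW : Wy + σ = X ^ q - X := by
    rw [hWydef, hmapW y₀, hσdef]
    exact modByMonic_add_div _ (Rm y₀)
  set S : Finset F := (A ×ˢ A).image (fun ab => ab.2 - ab.1 * y₀) with hSdef
  set d : ℕ := S.card with hddef
  have hdcard : (y₀ • A - A).card = d := by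
    have himg : y₀ • A - A = S.image Neg.neg := by
      ext u
      simp only [hSdef, Finset.mem_sub, Finset.mem_smul_finset, Finset.mem_image,
        Finset.mem_product, smul_eq_mul]
      constructor
      · rintro ⟨v, ⟨a, ha, rfl⟩, w, hw, rfl⟩
        exact ⟨w - a * y₀, ⟨(a, w), ⟨ha, hw⟩, rfl⟩, by ring⟩
      · rintro ⟨x, ⟨⟨a, b⟩, ⟨ha, hb⟩, rfl⟩, rfl⟩
        exact ⟨y₀ * a, ⟨a, ha, rfl⟩, b, hb, by ring⟩
    rw [himg, Finset.card_image_of_injective _ neg_injective, hddef]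
  have hpd : p < d := by rw [← hdcard]; exact hy₀card
  have hSrootR : ∀ v ∈ S, (Rm y₀).eval v = 0 := by
    intro v hv
    rw [hSdef, Finset.mem_image] at hv
    obtain ⟨ab, habmem, habv⟩ := hv
    rw [hRmdef, eval_prod]
    apply Finset.prod_eq_zero habmem
    rw [eval_sub, eval_X, eval_C, habv, sub_self]
  have hSrootσ : ∀ v ∈ S, σ.eval v = 0 := by
    intro v hv
    rw [hσdef, eval_mul, hSrootR v hv, zero_mul]
  have hSrootWy : ∀ v ∈ S, Wy.eval v = 0 := by
    intro v hv
    have h1 := congrArg (Polynomial.eval v) hσW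
    rw [eval_add, hSrootσ v hv, add_zero, Stmt11.eval_xqx v] at h1
    exact h1
  have hdty : d ≤ ty := by
    have hsub : S ⊆ Wy.roots.toFinset := by
      intro v hv
      rw [Multiset.mem_toFinset, mem_roots hWy0]
      exact hSrootWy v hv
    calc d ≤ Wy.roots.toFinset.card := Finset.card_le_card hsub
      _ ≤ Multiset.card Wy.roots := Multiset.toFinset_card_le _
      _ ≤ ty := Polynomial.card_roots' Wy
  -- multiplicities
  set mv : F → ℕ := fun v => ((A ×ˢ A).filter (fun ab => ab.2 - ab.1 * y₀ = v)).card with hmvdef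
  have hmv_dvd : ∀ v ∈ S, (X - C v) ^ (mv v) ∣ Rm y₀ := by
    intro v hv
    show (X - C v) ^ (mv v) ∣ ∏ ab ∈ A ×ˢ A, (X - C (ab.2 - ab.1 * y₀))
    rw [← Finset.prod_filter_mul_prod_filter_not (A ×ˢ A)
      (fun ab => ab.2 - ab.1 * y₀ = v)]
    apply Dvd.dvd.mul_right
    have hconst : ∏ ab ∈ (A ×ˢ A).filter (fun ab => ab.2 - ab.1 * y₀ = v),
        (X - C (ab.2 - ab.1 * y₀)) =
        ∏ _ab ∈ (A ×ˢ A).filter (fun ab => ab.2 - ab.1 * y₀ = v), (X - C v) := by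
      apply Finset.prod_congr rfl
      intro ab hab
      rw [Finset.mem_filter] at hab
      rw [hab.2]
    rw [hconst, Finset.prod_const]
  have hmv_pos : ∀ v ∈ S, 1 ≤ mv v := by
    intro v hv
    rw [hSdef, Finset.mem_image] at hv
    obtain ⟨ab, habmem, habv⟩ := hv
    rw [hmvdef]
    refine Finset.card_pos.mpr ⟨ab, ?_⟩
    rw [Finset.mem_filter]
    exact ⟨habmem, habv⟩
  have hmv_sum : ∑ v ∈ S, mv v = N := by
    rw [hNdef, hSdef, hmvdef]
    exact (Finset.card_eq_sum_card_image _ _).symm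
  have hmvσ : ∀ v ∈ S, (X - C v) ^ (mv v) ∣ σ := by
    intro v hv
    rw [hσdef]
    exact (hmv_dvd v hv).mul_right _
  have hderiv_dvd : ∀ v ∈ S, (X - C v) ^ (mv v - 1) ∣ derivative σ := by
    intro v hv
    obtain ⟨u, hu⟩ := hmvσ v hv
    rw [hu, derivative_mul, derivative_pow, derivative_X_sub_C]
    apply dvd_add
    · exact Dvd.dvd.mul_right (Dvd.dvd.mul_right (dvd_mul_left _ _) _) _
    · have h1 : (X - C v) ^ (mv v - 1) ∣ (X - C v) ^ (mv v) :=
        pow_dvd_pow _ (Nat.sub_le _ _)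
      exact h1.mul_right _
  have hσderiv : derivative σ = -(1 + derivative Wy) := by
    have hσeq : σ = (X ^ q - X) - Wy := by rw [← hσW]; ring
    rw [hσeq, derivative_sub, derivative_sub, derivative_X_pow, derivative_X]
    rw [show ((q : F)) = 0 from FiniteField.cast_card_eq_zero F, C_0, zero_mul]
    ring
  by_cases hσ'0 : derivative σ = 0
  · -- the p-th power case: contradiction with p < d
    exfalso
    have hpF : (p : F) = 0 := by
      have hcard0 : ((q : F)) = 0 := FiniteField.cast_card_eq_zero F
      rw [hq] at hcard0
      push_cast at hcard0
      exact pow_eq_zero_iff (by norm_num) |>.mp hcard0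
    have hring : ringChar F = p :=
      Or.resolve_left ((Nat.dvd_prime hp).1 (ringChar.dvd hpF)) CharP.ringChar_ne_one
    haveI : CharP F p := hring ▸ ringChar.charP F
    haveI : Fact p.Prime := ⟨hp⟩
    have hexp : Polynomial.expand F p (Polynomial.contract p σ) = σ :=
      Polynomial.expand_contract (p := p) hσ'0 hp.ne_zero
    have htyN : ty < N := by
      have hne1 : Rm y₀ ≠ 1 := by
        intro h1
        have h2 := hRm_deg y₀
        rw [h1, natDegree_one] at h2
        omega
      have h := natDegree_modByMonic_lt (X ^ q - X) (hRm_monic y₀) hne1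
      rw [hRm_deg y₀] at h
      rw [htydef, hWydef, hmapW y₀]
      exact h
    have hσdeg : σ.natDegree = q := by
      have hσeq : σ = (X ^ q - X) - Wy := by rw [← hσW]; ring
      rw [hσeq, natDegree_sub_eq_left_of_natDegree_lt, Stmt11.natDegree_xqx]
      rw [Stmt11.natDegree_xqx]
      omega
    have hσ0 : σ ≠ 0 := by
      intro h
      rw [h, natDegree_zero] at hσdeg
      omega
    have hV0 : Polynomial.contract p σ ≠ 0 := by
      intro h
      rw [h, map_zero] at hexp
      exact hσ0 hexp.symm
    have hVdeg : (Polynomial.contract p σ).natDegree = p := by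
      have h1 := Polynomial.natDegree_expand p (Polynomial.contract p σ)
      rw [hexp, hσdeg, hq] at h1
      exact Nat.eq_of_mul_eq_mul_right hp.pos (h1.symm.trans (pow_two p))
    have hSroot' : ∀ v ∈ S, (Polynomial.contract p σ).eval (v ^ p) = 0 := by
      intro v hv
      have h1 := Polynomial.expand_eval p (Polynomial.contract p σ) v
      rw [hexp] at h1
      rw [← h1]
      exact hSrootσ v hv
    have hfrobinj : Function.Injective (fun v : F => v ^ p) := by
      intro a b hab
      exact frobenius_inj F p hab
    have hsub : S.image (fun v => v ^ p) ⊆ (Polynomial.contract p σ).roots.toFinset := by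
      intro w hw
      rw [Finset.mem_image] at hw
      obtain ⟨v, hv, rfl⟩ := hw
      rw [Multiset.mem_toFinset, mem_roots hV0]
      exact hSroot' v hv
    have hdp : d ≤ p := by
      calc d = (S.image (fun v => v ^ p)).card :=
            (Finset.card_image_of_injective _ hfrobinj).symm
        _ ≤ (Polynomial.contract p σ).roots.toFinset.card := Finset.card_le_card hsub
        _ ≤ Multiset.card (Polynomial.contract p σ).roots := Multiset.toFinset_card_le _
        _ ≤ (Polynomial.contract p σ).natDegree := Polynomial.card_roots' _
        _ = p := hVdeg
    omega
  · -- the main case: N - d ≤ ty - 1, so 2 ty ≥ N + 1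
    have hprod_dvd : (∏ v ∈ S, (X - C v) ^ (mv v - 1)) ∣ derivative σ := by
      apply Finset.prod_dvd_of_coprime
      · intro u hu v hv huv
        apply IsCoprime.pow
        exact isCoprime_X_sub_C_of_isUnit_sub (isUnit_iff_ne_zero.mpr (sub_ne_zero.mpr huv))
      · intro v hv
        exact hderiv_dvd v hv
    have hprod_deg : (∏ v ∈ S, (X - C v) ^ (mv v - 1)).natDegree = ∑ v ∈ S, (mv v - 1) := by
      rw [natDegree_prod _ _ (fun v _ => pow_ne_zero _ (X_sub_C_ne_zero v))]
      apply Finset.sum_congr rfl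
      intro v _
      rw [natDegree_pow, natDegree_X_sub_C, mul_one]
    have hsum_le : ∑ v ∈ S, (mv v - 1) ≤ (derivative σ).natDegree := by
      rw [← hprod_deg]
      exact Polynomial.natDegree_le_of_dvd hprod_dvd hσ'0
    have hsum_eq : ∑ v ∈ S, (mv v - 1) + d = N := by
      have h1 : ∑ v ∈ S, (mv v - 1) + ∑ _v ∈ S, 1 = ∑ v ∈ S, mv v := by
        rw [← Finset.sum_add_distrib]
        apply Finset.sum_congr rfl
        intro v hv
        have := hmv_pos v hv
        omega
      rw [Finset.sum_const, smul_eq_mul, mul_one] at h1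
      rw [hmv_sum] at h1
      rw [← hddef] at h1
      exact h1
    have hσ'deg : (derivative σ).natDegree ≤ ty - 1 := by
      rw [hσderiv, natDegree_neg]
      calc (1 + derivative Wy).natDegree
          ≤ max (1 : F[X]).natDegree (derivative Wy).natDegree := natDegree_add_le _ _
        _ ≤ (derivative Wy).natDegree := by rw [natDegree_one]; omega
        _ ≤ ty - 1 := natDegree_derivative_le Wy
    have hdN : d ≤ N := by
      rw [hddef, hSdef, hNdef]
      exact Finset.card_image_le
    have hty1 : 1 ≤ ty := by omega
    have hfinal : N + 1 ≤ 2 * ty := by omega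
    rw [hNA] at hfinal
    omega
end
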